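/- Let ℓ ≥ 3 and let Ṙ ⊆ ℤ^ℓ be the root system of type C_ℓ, with short roots Ṙ_sh = {±e_i ± e_j : 1 ≤ i < j ≤ ℓ} and long roots Ṙ_lg = {±2e_i : 1 ≤ i ≤ ℓ}. Let Λ be a free abelian group of finite rank and let L ⊆ Λ be a subset with 0 ∈ L and L + 2Λ ⊆ L. In ℤ^ℓ ⊕ Λ set R := ({0} ⊕ Λ) ∪ {α̇ + λ : α̇ ∈ Ṙ_sh, λ ∈ Λ} ∪ {β̇ + μ : β̇ ∈ Ṙ_lg, μ ∈ L}, with isotropic roots R⁰ = {0} ⊕ Λ and non-isotropic roots R^× = R ∖ R⁰. Then every core-character of R is a character: if ψ : R → ℂˣ satisfies ψ(α + β) = ψ(α)ψ(β) whenever α ∈ R^×, β ∈ R and α + β ∈ R, then ψ(α + β) = ψ(α)ψ(β) for all α, β ∈ R with α + β ∈ R. -/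

import Mathlib

/-! The only products not covered by the core-character condition are those of two isotropic
roots `(0, λ)` and `(0, μ)`. For these, translate by a short root `γ = (v, 0)`: since every
`(v, ν)` is a non-isotropic root, the core condition evaluates `ψ (v, λ + μ)` both as
`ψ γ * ψ (0, λ + μ)` and as `ψ (v, λ) * ψ (0, μ) = ψ γ * ψ (0, λ) * ψ (0, μ)`, and `ψ γ`
cancels. -/

section Characters

variable {G M : Type*} [AddCommGroup G] [CancelCommMonoid M]

def IsCoreCharacter (R R0 : Set G) (ψ : G → M) : Prop :=
  ∀ α ∈ R \ R0, ∀ β ∈ R, α + β ∈ R → ψ (α + β) = ψ α * ψ β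

def IsCharacter (R : Set G) (ψ : G → M) : Prop :=
  ∀ α ∈ R, ∀ β ∈ R, α + β ∈ R → ψ (α + β) = ψ α * ψ β

theorem IsCoreCharacter.isCharacter {R R0 : Set G} {ψ : G → M}
    (hψ : IsCoreCharacter R R0 ψ)
    (hiso : ∀ α ∈ R ∩ R0, ∀ β ∈ R ∩ R0, α + β ∈ R → ψ (α + β) = ψ α * ψ β) :
    IsCharacter R ψ := by
  intro α hα β hβ hαβ
  by_cases hα0 : α ∈ R0
  · by_cases hβ0 : β ∈ R0
    · exact hiso α ⟨hα, hα0⟩ β ⟨hβ, hβ0⟩ hαβ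
    · rw [add_comm, mul_comm]
      exact hψ β ⟨hβ, hβ0⟩ α hα (by rwa [add_comm])
  · exact hψ α ⟨hα, hα0⟩ β hβ hαβ

theorem IsCoreCharacter.map_add_of_translate {R R0 : Set G} {ψ : G → M}
    (hψ : IsCoreCharacter R R0 ψ) {γ α β : G} (hγ : γ ∈ R \ R0) (hγα : γ + α ∈ R \ R0)
    (hα : α ∈ R) (hβ : β ∈ R) (hαβ : α + β ∈ R) (hγαβ : γ + α + β ∈ R) :
    ψ (α + β) = ψ α * ψ β := by
  have hsplit_right : ψ (γ + α + β) = ψ (γ + α) * ψ β := hψ _ hγα β hβ hγαβ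
  have hsplit_left : ψ (γ + α) = ψ γ * ψ α := hψ γ hγ α hα hγα.1
  have hsplit_sum : ψ (γ + (α + β)) = ψ γ * ψ (α + β) :=
    hψ γ hγ _ hαβ (by rwa [← add_assoc])
  refine mul_left_cancel (a := ψ γ) ?_
  rw [← hsplit_sum, ← add_assoc, hsplit_right, hsplit_left, mul_assoc]

end Characters

theorem single_add_single_ne_zero {ℓ : ℕ} {i j : Fin ℓ} (hij : i ≠ j) :
    (Pi.single i 1 + Pi.single j 1 : Fin ℓ → ℤ) ≠ 0 := by
  intro h
  simpa [hij] using congrFun h i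

theorem stmt6_general (ℓ : ℕ) (hℓ : 3 ≤ ℓ)
    (Λ : Type*) [AddCommGroup Λ]
    (Lset : Set Λ)
    (Rsh Rlg : Set (Fin ℓ → ℤ))
    (hRsh : Rsh = {v | ∃ i j : Fin ℓ, i ≠ j ∧ ∃ a b : ℤ, (a = 1 ∨ a = -1) ∧
      (b = 1 ∨ b = -1) ∧ v = a • Pi.single i 1 + b • Pi.single j 1})
    (R R0 Rx : Set ((Fin ℓ → ℤ) × Λ))
    (hR : R = {p | p.1 = 0 ∨ p.1 ∈ Rsh ∨ (p.1 ∈ Rlg ∧ p.2 ∈ Lset)})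
    (hR0 : R0 = {p : (Fin ℓ → ℤ) × Λ | p.1 = 0})
    (hRx : Rx = R \ R0)
    (ψ : (Fin ℓ → ℤ) × Λ → ℂˣ)
    (hcore : ∀ α ∈ Rx, ∀ β ∈ R, α + β ∈ R → ψ (α + β) = ψ α * ψ β) :
    ∀ α ∈ R, ∀ β ∈ R, α + β ∈ R → ψ (α + β) = ψ α * ψ β := by
  have hψ : IsCoreCharacter R R0 ψ := by rwa [hRx] at hcore
  let i : Fin ℓ := ⟨0, by omega⟩
  let j : Fin ℓ := ⟨1, by omega⟩
  have hij : i ≠ j := by simp [i, j, Fin.ext_iff]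
  set v : Fin ℓ → ℤ := Pi.single i 1 + Pi.single j 1
  have hv : ∀ ν : Λ, (v, ν) ∈ R \ R0 := by
    refine fun ν ↦ ⟨?_, ?_⟩
    · rw [hR, hRsh]
      exact Or.inr (Or.inl ⟨i, j, hij, 1, 1, Or.inl rfl, Or.inl rfl, by simp [v]⟩)
    · rw [hR0]
      exact single_add_single_ne_zero hij
  refine hψ.isCharacter ?_
  rintro ⟨a, ν₁⟩ ⟨hα, ha⟩ ⟨b, ν₂⟩ ⟨hβ, hb⟩ hαβ
  rw [hR0] at ha hb
  obtain rfl : a = 0 := ha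
  obtain rfl : b = 0 := hb
  refine hψ.map_add_of_translate (γ := (v, 0)) (hv 0) ?_ hα hβ hαβ ?_
  · simpa using hv ν₁
  · simpa using (hv (ν₁ + ν₂)).1

/-- Let `ℓ ≥ 3` and `Ṙ ⊆ ℤ^ℓ` the root system of type `C_ℓ`, with short roots
`±e_i ± e_j` (`i ≠ j`) and long roots `±2e_i`.  Let `Λ` be a free abelian group of finite rank
and `L ⊆ Λ` with `0 ∈ L`, `L + 2Λ ⊆ L`.  For the extended affine root system
`R = ({0} ⊕ Λ) ∪ (Ṙ_sh + Λ) ∪ (Ṙ_lg + L)` of type `C_ℓ`, every core-character is a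
character. -/
theorem stmt6 (ℓ : ℕ) (hℓ : 3 ≤ ℓ)
    (Λ : Type*) [AddCommGroup Λ] [Module.Free ℤ Λ] [Module.Finite ℤ Λ]
    (Lset : Set Λ) (hL0 : (0 : Λ) ∈ Lset)
    (hL2 : ∀ μ ∈ Lset, ∀ y : Λ, μ + (2 : ℤ) • y ∈ Lset)
    (Rsh Rlg : Set (Fin ℓ → ℤ))
    (hRsh : Rsh = {v | ∃ i j : Fin ℓ, i ≠ j ∧ ∃ a b : ℤ, (a = 1 ∨ a = -1) ∧
      (b = 1 ∨ b = -1) ∧ v = a • Pi.single i 1 + b • Pi.single j 1})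
    (hRlg : Rlg = {v | ∃ i : Fin ℓ, ∃ a : ℤ, (a = 1 ∨ a = -1) ∧
      v = a • ((2 : ℤ) • Pi.single i 1)})
    (R R0 Rx : Set ((Fin ℓ → ℤ) × Λ))
    (hR : R = {p | p.1 = 0 ∨ p.1 ∈ Rsh ∨ (p.1 ∈ Rlg ∧ p.2 ∈ Lset)})
    (hR0 : R0 = {p : (Fin ℓ → ℤ) × Λ | p.1 = 0})
    (hRx : Rx = R \ R0)
    (ψ : (Fin ℓ → ℤ) × Λ → ℂˣ)
    (hcore : ∀ α ∈ Rx, ∀ β ∈ R, α + β ∈ R → ψ (α + β) = ψ α * ψ β) :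
    ∀ α ∈ R, ∀ β ∈ R, α + β ∈ R → ψ (α + β) = ψ α * ψ β :=
  stmt6_general ℓ hℓ Λ Lset Rsh Rlg hRsh R R0 Rx hR hR0 hRx ψ hcore
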